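/- Let G be a finite simple graph, let (T,𝒱) be a tree decomposition of G, let x be a vertex of T of degree k ≥ 4, and let (T',𝒱') be a splitting of (T,𝒱) with respect to x. Then (T',𝒱') is a tree decomposition of G, the width of (T',𝒱') equals the width of (T,𝒱), and the number of vertices of T' of degree greater than 3 equals the number of vertices of T of degree greater than 3 minus one. -/

import Mathlib

/-!
The new bags are the old ones pulled back along `splitGraph.proj`, which contracts the path
`x₁ — ⋯ — x_k` back to `x`. Every walk of `Gt` lifts to a walk of the split tree that stays in the
fibres of the vertices it visits; this gives connectivity and, since in a tree a path lies on
every walk with the same ends, the path condition on the bags. Acyclicity then follows by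
counting: by the handshake lemma the split graph has `k - 1` more edges than `Gt`, and it has
`k - 1` more vertices. Finally each `xᵢ` has degree at most `3`, every other vertex keeps its
degree, and `x` had degree `k ≥ 4`.
-/

open SimpleGraph

/-- `(Gt, bags)` is a tree decomposition of `G`: `Gt` is a tree; every vertex of `G` lies in
some bag; every edge of `G` is covered by some bag; and whenever `t₂` lies on the (unique)
path of `Gt` between `t₁` and `t₃`, the intersection of the bags of `t₁` and `t₃` is
contained in the bag of `t₂`. -/
def IsTreeDecomp {V α : Type} (G : SimpleGraph V) (Gt : SimpleGraph α)
    (bags : α → Set V) : Prop :=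
  Gt.IsTree ∧
  (∀ v : V, ∃ t, v ∈ bags t) ∧
  (∀ v w : V, G.Adj v w → ∃ t, v ∈ bags t ∧ w ∈ bags t) ∧
  (∀ (t₁ t₂ t₃ : α) (p : Gt.Walk t₁ t₃), p.IsPath → t₂ ∈ p.support →
    bags t₁ ∩ bags t₃ ⊆ bags t₂)

/-- The width `max_t |V_t| − 1` (as an integer) of a decomposition with bags `bags`. -/
noncomputable def decompWidth {V α : Type} (bags : α → Set V) : ℤ :=
  ((sSup (Set.range fun t => (bags t).ncard) : ℕ) : ℤ) - 1

/-- The adjacency relation of the splitting of the tree `Gt` at the vertex `x`, whose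
neighbours are enumerated by `e : Fin k → α`: `x` is replaced by a path `x₁ — x₂ — ⋯ — x_k`
of `k` new vertices, the `i`-th neighbour `e i` is joined to `xᵢ`, and all edges of `Gt` not
incident to `x` are kept. -/
def splitAdj {α : Type} (Gt : SimpleGraph α) (x : α) (k : ℕ) (e : Fin k → α) :
    ({y : α // y ≠ x} ⊕ Fin k) → ({y : α // y ≠ x} ⊕ Fin k) → Prop
  | Sum.inl y, Sum.inl z => Gt.Adj y.1 z.1
  | Sum.inl y, Sum.inr i => y.1 = e i
  | Sum.inr i, Sum.inl y => y.1 = e i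
  | Sum.inr i, Sum.inr j => (i : ℕ) + 1 = (j : ℕ) ∨ (j : ℕ) + 1 = (i : ℕ)

/-- The graph obtained by splitting `Gt` at `x` (with neighbours enumerated by `e`). -/
def splitGraph {α : Type} (Gt : SimpleGraph α) (x : α) (k : ℕ) (e : Fin k → α) :
    SimpleGraph ({y : α // y ≠ x} ⊕ Fin k) where
  Adj := splitAdj Gt x k e
  symm := ⟨by
    rintro (y | i) (z | j) h <;> simp only [splitAdj] at h ⊢
    · exact Gt.adj_symm h
    · exact h
    · exact h
    · omega⟩
  loopless := ⟨by
    rintro (y | i) h <;> simp only [splitAdj] at h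
    · exact Gt.irrefl h
    · omega⟩

namespace SimpleGraph

variable {W : Type*} {H : SimpleGraph W}

theorem IsAcyclic.support_subset_of_isPath (hH : H.IsAcyclic) {u v : W} {p : H.Walk u v}
    (hp : p.IsPath) (q : H.Walk u v) : p.support ⊆ q.support := by
  classical
  have hpq : p = q.bypass :=
    congrArg Subtype.val ((hH.subsingleton_path u v).elim ⟨p, hp⟩ ⟨q.bypass, q.bypass_isPath⟩)
  rw [hpq]
  exact q.support_bypass_subset_support

theorem sum_ncard_neighborSet [Fintype W] :
    ∑ v, (H.neighborSet v).ncard = 2 * Nat.card H.edgeSet := by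
  classical
  simp only [← Nat.card_coe_set_eq, Nat.card_eq_fintype_card, card_neighborSet_eq_degree,
    sum_degrees_eq_twice_card_edges, edgeFinset_card]

theorem ncard_neighborSet_eq_of_enum {k : ℕ} {e : Fin k → W} {v : W} (he : Function.Injective e)
    (hadj : ∀ i, H.Adj v (e i)) (hcov : ∀ w, H.Adj v w → ∃ i, e i = w) :
    (H.neighborSet v).ncard = k := by
  have hN : H.neighborSet v = Set.range e :=
    Set.ext fun w => ⟨hcov w, fun ⟨i, hi⟩ => hi ▸ hadj i⟩
  rw [hN, Set.ncard_range_of_injective he, Nat.card_fin]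

theorem card_edgeSet_pathGraph (n : ℕ) : Nat.card (pathGraph n).edgeSet = n - 1 := by
  let f : Fin (n - 1) → (pathGraph n).edgeSet := fun i =>
    ⟨s(⟨i, by omega⟩, ⟨i + 1, by omega⟩), by simp [pathGraph_adj]⟩
  have hf : Function.Bijective f := by
    refine ⟨fun i j hij => ?_, fun ⟨d, hd⟩ => ?_⟩
    · simp only [f, Subtype.mk.injEq, Sym2.eq_iff, Fin.ext_iff] at hij
      omega
    · induction d using Sym2.ind with
      | h a b =>
        have := a.isLt
        have := b.isLt
        rw [mem_edgeSet, pathGraph_adj] at hd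
        rcases hd with hab | hab
        · exact ⟨⟨a, by omega⟩, by simp [f, hab]⟩
        · exact ⟨⟨b, by omega⟩, by simp [f, Sym2.eq_swap, hab]⟩
  rw [← Nat.card_eq_of_bijective f hf, Nat.card_fin]

theorem ncard_neighborSet_pathGraph_le {n : ℕ} (i : Fin n) :
    ((pathGraph n).neighborSet i).ncard ≤ 2 :=
  calc ((pathGraph n).neighborSet i).ncard
      ≤ ({(i : ℕ) - 1, (i : ℕ) + 1} : Set ℕ).ncard :=
        Set.ncard_le_ncard_of_injOn Fin.val
          (fun j hj => by
            simp only [mem_neighborSet, pathGraph_adj] at hj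
            simp only [Set.mem_insert_iff, Set.mem_singleton_iff]
            omega)
          Fin.val_injective.injOn
    _ ≤ 2 := (Set.ncard_insert_le _ _).trans (by simp)

end SimpleGraph

section TreeDecomp

variable {V α β : Type} {G : SimpleGraph V} {Gt : SimpleGraph α} {H : SimpleGraph β}

theorem IsTreeDecomp.comp_of_lift {bags : α → Set V} (h : IsTreeDecomp G Gt bags)
    (hH : H.IsTree) {π : β → α} (hπ : Function.Surjective π)
    (hlift : ∀ s t (q : Gt.Walk (π s) (π t)), ∃ W : H.Walk s t, ∀ u ∈ W.support, π u ∈ q.support) :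
    IsTreeDecomp G H (bags ∘ π) := by
  obtain ⟨hGt, hvert, hedge, hsep⟩ := h
  refine ⟨hH, fun v => ?_, fun v w hvw => ?_, fun t₁ t₂ t₃ p hp ht₂ => ?_⟩
  · obtain ⟨a, ha⟩ := hvert v
    obtain ⟨s, rfl⟩ := hπ a
    exact ⟨s, ha⟩
  · obtain ⟨a, ha⟩ := hedge v w hvw
    obtain ⟨s, rfl⟩ := hπ a
    exact ⟨s, ha⟩
  · obtain ⟨q, hq⟩ := hGt.connected.exists_isPath (π t₁) (π t₃)
    obtain ⟨W, hW⟩ := hlift t₁ t₃ q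
    exact hsep _ _ _ q hq (hW t₂ (hH.isAcyclic.support_subset_of_isPath hp W ht₂))

theorem decompWidth_comp_of_surjective (bags : α → Set V) {π : β → α}
    (hπ : Function.Surjective π) : decompWidth (bags ∘ π) = decompWidth bags := by
  unfold decompWidth
  rw [← hπ.range_comp]
  rfl

end TreeDecomp

namespace splitGraph

variable {α : Type} {Gt : SimpleGraph α} {x : α} {k : ℕ} {e : Fin k → α}

def proj (x : α) : {y : α // y ≠ x} ⊕ Fin k → α :=
  Sum.elim Subtype.val fun _ => x

theorem proj_surjective (hk : 0 < k) : Function.Surjective (proj (k := k) x) := by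
  intro a
  by_cases ha : a = x
  · exact ⟨.inr ⟨0, hk⟩, ha.symm⟩
  · exact ⟨.inl ⟨a, ha⟩, rfl⟩

theorem exists_walk_inr_inr (i j : Fin k) :
    ∃ W : (splitGraph Gt x k e).Walk (.inr i) (.inr j), ∀ u ∈ W.support, proj x u = x := by
  obtain ⟨q⟩ := pathGraph_preconnected k i j
  let f : pathGraph k →g splitGraph Gt x k e := ⟨Sum.inr, fun h => pathGraph_adj.mp h⟩
  refine ⟨q.map f, fun u hu => ?_⟩
  rw [Walk.support_map, List.mem_map] at hu
  obtain ⟨_, _, rfl⟩ := hu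
  rfl

theorem exists_walk_of_proj_eq {s t : {y : α // y ≠ x} ⊕ Fin k}
    (h : proj x s = proj x t) :
    ∃ W : (splitGraph Gt x k e).Walk s t, ∀ u ∈ W.support, proj x u = proj x s := by
  rcases s with y | i <;> rcases t with z | j
  · obtain rfl : y = z := Subtype.ext h
    exact ⟨.nil, by simp⟩
  · exact absurd h y.2
  · exact absurd h.symm z.2
  · exact exists_walk_inr_inr i j

theorem exists_adj_of_adj (hecov : ∀ y, Gt.Adj x y → ∃ i, e i = y) {a b : α}
    (hab : Gt.Adj a b) : ∃ s t, proj x s = a ∧ proj x t = b ∧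
      (splitGraph Gt x k e).Adj s t := by
  by_cases ha : a = x
  · subst ha
    obtain ⟨i, rfl⟩ := hecov _ hab
    exact ⟨.inr i, .inl ⟨e i, hab.ne'⟩, rfl, rfl, rfl⟩
  by_cases hb : b = x
  · subst hb
    obtain ⟨i, rfl⟩ := hecov _ hab.symm
    exact ⟨.inl ⟨e i, hab.ne⟩, .inr i, rfl, rfl, rfl⟩
  exact ⟨.inl ⟨a, ha⟩, .inl ⟨b, hb⟩, rfl, rfl, hab⟩

theorem exists_walk_lift (hecov : ∀ y, Gt.Adj x y → ∃ i, e i = y) {a b : α} (q : Gt.Walk a b)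
    {s t : {y : α // y ≠ x} ⊕ Fin k} (hs : proj x s = a) (ht : proj x t = b) :
    ∃ W : (splitGraph Gt x k e).Walk s t, ∀ u ∈ W.support, proj x u ∈ q.support := by
  induction q generalizing s with
  | nil =>
    obtain ⟨W, hW⟩ := exists_walk_of_proj_eq (e := e) (hs.trans ht.symm)
    exact ⟨W, fun u hu => by simp [hW u hu, hs]⟩
  | cons hac q ih =>
    obtain ⟨s', t', hs', ht', hst⟩ := exists_adj_of_adj (k := k) hecov hac
    obtain ⟨W₁, hW₁⟩ := exists_walk_of_proj_eq (e := e) (hs.trans hs'.symm)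
    obtain ⟨W₂, hW₂⟩ := ih ht' ht
    refine ⟨W₁.append (.cons hst W₂), fun u hu => ?_⟩
    rw [Walk.support_cons, List.mem_cons]
    rw [Walk.mem_support_append_iff, Walk.support_cons, List.mem_cons] at hu
    rcases hu with hu | rfl | hu
    · exact .inl ((hW₁ u hu).trans hs)
    · exact .inl hs'
    · exact .inr (hW₂ u hu)

theorem connected (hk : 0 < k) (hecov : ∀ y, Gt.Adj x y → ∃ i, e i = y)
    (hconn : Gt.Connected) : (splitGraph Gt x k e).Connected := by
  have : Nonempty ({y : α // y ≠ x} ⊕ Fin k) := ⟨.inr ⟨0, hk⟩⟩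
  refine ⟨fun s t => ?_⟩
  obtain ⟨q⟩ := hconn.preconnected (proj x s) (proj x t)
  obtain ⟨W, -⟩ := exists_walk_lift hecov q rfl rfl
  exact ⟨W⟩

theorem ncard_neighborSet_inl (he : Function.Injective e)
    (headj : ∀ i, Gt.Adj x (e i)) (hecov : ∀ y, Gt.Adj x y → ∃ i, e i = y)
    (y : {y : α // y ≠ x}) :
    ((splitGraph Gt x k e).neighborSet (.inl y)).ncard = (Gt.neighborSet y).ncard := by
  refine Set.ncard_congr (fun t _ => proj x t) ?_ ?_ ?_
  · rintro (z | i) hz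
    · exact hz
    · exact (show y.1 = e i from hz) ▸ (headj i).symm
  · rintro (z | i) (z' | i') hz hz' hzz'
    · exact congrArg Sum.inl (Subtype.ext hzz')
    · exact absurd hzz' z.2
    · exact absurd hzz'.symm z'.2
    · exact congrArg Sum.inr (he ((show y.1 = e i from hz).symm.trans hz'))
  · intro b hb
    by_cases hbx : b = x
    · subst hbx
      obtain ⟨i, hi⟩ := hecov y (Gt.adj_symm hb)
      exact ⟨.inr i, hi.symm, rfl⟩
    · exact ⟨.inl ⟨b, hbx⟩, hb, rfl⟩

theorem ncard_neighborSet_inr (headj : ∀ i, Gt.Adj x (e i)) (i : Fin k) :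
    ((splitGraph Gt x k e).neighborSet (.inr i)).ncard =
      ((pathGraph k).neighborSet i).ncard + 1 := by
  have hN : (splitGraph Gt x k e).neighborSet (.inr i) =
      insert (.inl ⟨e i, (headj i).ne'⟩) (Sum.inr '' (pathGraph k).neighborSet i) := by
    ext (z | j)
    · simp [splitGraph, splitAdj, Subtype.ext_iff]
    · simp [splitGraph, splitAdj, pathGraph_adj]
  rw [hN, Set.ncard_insert_of_notMem (by simp), Set.ncard_image_of_injective _ Sum.inr_injective]

theorem card_edgeSet [Fintype α] (hk : 0 < k) (he : Function.Injective e)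
    (headj : ∀ i, Gt.Adj x (e i)) (hecov : ∀ y, Gt.Adj x y → ∃ i, e i = y) :
    Nat.card (splitGraph Gt x k e).edgeSet + 1 = Nat.card Gt.edgeSet + k := by
  classical
  have hsplit := sum_ncard_neighborSet (H := splitGraph Gt x k e)
  have hGt := sum_ncard_neighborSet (H := Gt)
  have hpath := sum_ncard_neighborSet (H := pathGraph k)
  rw [card_edgeSet_pathGraph] at hpath
  rw [Fintype.sum_eq_add_sum_subtype_ne _ x, ncard_neighborSet_eq_of_enum he headj hecov] at hGt
  simp only [Fintype.sum_sum_type, ncard_neighborSet_inl he headj hecov,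
    ncard_neighborSet_inr headj, Finset.sum_add_distrib, Finset.sum_const,
    Finset.card_univ, Fintype.card_fin, smul_eq_mul, mul_one] at hsplit
  omega

theorem isTree [Fintype α] (hk : 0 < k) (he : Function.Injective e)
    (headj : ∀ i, Gt.Adj x (e i)) (hecov : ∀ y, Gt.Adj x y → ∃ i, e i = y) (h : Gt.IsTree) :
    (splitGraph Gt x k e).IsTree := by
  rw [isTree_iff_connected_and_card] at h ⊢
  refine ⟨connected hk hecov h.1, ?_⟩
  have hV : Nat.card {y : α // y ≠ x} + 1 = Nat.card α := by
    classical
    have := Fintype.card_pos_iff.mpr ⟨x⟩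
    simp only [Nat.card_eq_fintype_card, Fintype.card_subtype_compl, Fintype.card_unique]
    omega
  rw [card_edgeSet hk he headj hecov, Nat.card_sum, Nat.card_fin]
  omega

theorem ncard_highDegree_add_one [Finite α] (hk : 4 ≤ k) (he : Function.Injective e)
    (headj : ∀ i, Gt.Adj x (e i)) (hecov : ∀ y, Gt.Adj x y → ∃ i, e i = y) :
    {t | 3 < ((splitGraph Gt x k e).neighborSet t).ncard}.ncard + 1 =
      {a | 3 < (Gt.neighborSet a).ncard}.ncard := by
  have hset : {t | 3 < ((splitGraph Gt x k e).neighborSet t).ncard} =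
      Sum.inl '' (Subtype.val ⁻¹' {a | 3 < (Gt.neighborSet a).ncard}) := by
    ext (y | i)
    · simp [ncard_neighborSet_inl he headj hecov]
    · refine iff_of_false (fun (hi : 3 < _) => ?_) (by simp)
      have := ncard_neighborSet_pathGraph_le i
      rw [ncard_neighborSet_inr headj] at hi
      omega
  have hx : x ∈ {a | 3 < (Gt.neighborSet a).ncard} := by
    simp only [Set.mem_ofPred_eq, ncard_neighborSet_eq_of_enum he headj hecov]
    omega
  rw [hset, Set.ncard_image_of_injective _ Sum.inl_injective,
    ← Set.ncard_image_of_injective _ Subtype.val_injective, Set.image_preimage_eq_inter_range,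
    Subtype.range_coe_subtype, ← Set.compl_singleton_eq, ← Set.sdiff_eq]
  exact Set.ncard_sdiff_singleton_add_one hx

end splitGraph

theorem splitting_isTreeDecomp {V α : Type} [Fintype α]
    (G : SimpleGraph V) (Gt : SimpleGraph α) (bags : α → Set V)
    (h : IsTreeDecomp G Gt bags)
    (x : α) (k : ℕ) (hk : 4 ≤ k)
    (e : Fin k → α) (he : Function.Injective e)
    (headj : ∀ i, Gt.Adj x (e i))
    (hecov : ∀ y, Gt.Adj x y → ∃ i, e i = y) :
    IsTreeDecomp G (splitGraph Gt x k e)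
        (Sum.elim (fun y : {y : α // y ≠ x} => bags y.1) fun _ : Fin k => bags x) ∧
    decompWidth (Sum.elim (fun y : {y : α // y ≠ x} => bags y.1) fun _ : Fin k => bags x)
        = decompWidth bags ∧
    {t : {y : α // y ≠ x} ⊕ Fin k | 3 < ((splitGraph Gt x k e).neighborSet t).ncard}.ncard + 1
        = {t : α | 3 < (Gt.neighborSet t).ncard}.ncard := by
  have hk₀ : 0 < k := by omega
  have hπ : Function.Surjective (splitGraph.proj (k := k) x) := splitGraph.proj_surjective hk₀
  have hbags : (Sum.elim (fun y : {y : α // y ≠ x} => bags y.1) fun _ : Fin k => bags x) =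
      bags ∘ splitGraph.proj x := (Sum.comp_elim _ _ _).symm
  rw [hbags]
  exact ⟨h.comp_of_lift (splitGraph.isTree hk₀ he headj hecov h.1) hπ
      fun _ _ q => splitGraph.exists_walk_lift hecov q rfl rfl,
    decompWidth_comp_of_surjective bags hπ, splitGraph.ncard_highDegree_add_one hk he headj hecov⟩
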